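/- arXiv:2602.18317 — 5 statements merged into one kernel-verified Lean document; each statement's English description precedes it below -/
import Mathlib

section
/- If H is a linear forest (a disjoint union of paths), then a graph G contains H as an induced subgraph if and only if G contains H as an induced minor. -/
/-!
Singleton branch sets turn an induced copy into an induced minor. Conversely, let B₀, …, B_{k-1}
be the branch sets of one path of the forest and take a shortest walk in `G[⋃ Bₜ]` from B₀ to
B_{k-1}. Edges only join equal or consecutive branch sets, so the branch-set index rises by at most
one per step and the walk has at least `k` vertices; the first `k` vertices of a shortest walk span
an induced path. The paths obtained for different components lie in the unions of their branch
sets, which are disjoint and have no edges between them.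
-/

/-- `H` is an induced minor of `G`. -/
def IsInducedMinor {V W : Type*} (G : SimpleGraph V) (H : SimpleGraph W) : Prop :=
  ∃ B : W → Set V,
    (∀ w, (G.induce (B w)).Connected) ∧
    (∀ w w', w ≠ w' → Disjoint (B w) (B w')) ∧
    (∀ w w', w ≠ w' → (H.Adj w w' ↔ ∃ a ∈ B w, ∃ b ∈ B w', G.Adj a b))

/-- The linear forest which is the disjoint union of `n` paths, where the `i`-th
path has `l i` vertices. -/
def linForest (n : ℕ) (l : Fin n → ℕ) : SimpleGraph (Σ i : Fin n, Fin (l i)) :=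
  SimpleGraph.fromRel (fun a b => a.1 = b.1 ∧ a.2.val + 1 = b.2.val)

namespace SimpleGraph

variable {V : Type*} {G : SimpleGraph V}

lemma Walk.apply_le_apply_add_length {f : V → ℕ} (hf : ∀ a b, G.Adj a b → f b ≤ f a + 1)
    {u v : V} (p : G.Walk u v) : f v ≤ f u + p.length := by
  induction p with
  | nil => simp
  | cons h _ ih => have := hf _ _ h; simp only [Walk.length_cons]; omega

lemma Reachable.apply_le_apply_add_dist {f : V → ℕ} (hf : ∀ a b, G.Adj a b → f b ≤ f a + 1)
    {u v : V} (h : G.Reachable u v) : f v ≤ f u + G.dist u v := by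
  obtain ⟨p, hp⟩ := h.exists_walk_length_eq_dist
  exact hp ▸ p.apply_le_apply_add_length hf

lemma Walk.dist_getVert_of_length_eq_dist {u v : V} {p : G.Walk u v}
    (hp : p.length = G.dist u v) {j : ℕ} (hj : j ≤ p.length) : G.dist u (p.getVert j) = j := by
  rw [← length_eq_dist_of_subwalk hp (p.isSubwalk_take j), Walk.take_length]
  omega

/-- The first `k` vertices of a shortest walk span an induced path. -/
lemma Reachable.nonempty_pathGraph_embedding {u v : V} (h : G.Reachable u v) {k : ℕ}
    (hk : k ≤ G.dist u v + 1) : Nonempty (pathGraph k ↪g G) := by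
  obtain ⟨p, hp⟩ := h.exists_walk_length_eq_dist
  have hdist (j : Fin k) : G.dist u (p.getVert j) = j :=
    Walk.dist_getVert_of_length_eq_dist hp (by omega)
  have hinj : Function.Injective fun j : Fin k => p.getVert j := fun s t hst =>
    Fin.ext (by simpa [hdist] using congrArg (G.dist u) hst)
  refine ⟨⟨⟨_, hinj⟩, fun {s t} => ?_⟩⟩
  change G.Adj (p.getVert s) (p.getVert t) ↔ (pathGraph k).Adj s t
  rw [pathGraph_adj]
  constructor
  · intro hadj
    have hne : s ≠ t := by rintro rfl; exact G.irrefl hadj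
    have := hadj.diff_dist_adj (u := u)
    rw [hdist, hdist] at this
    omega
  · rintro (hst | hst) <;> rw [← hst]
    · exact p.adj_getVert_succ (by omega)
    · exact (p.adj_getVert_succ (by omega)).symm

lemma preconnected_induce_iUnion_of_adj_succ {m : ℕ} {B : Fin (m + 1) → Set V}
    (hconn : ∀ t, (G.induce (B t)).Connected)
    (hsucc : ∀ t : Fin m, ∃ a ∈ B t.castSucc, ∃ b ∈ B t.succ, G.Adj a b) :
    (G.induce (⋃ t, B t)).Preconnected := by
  have hsub (t) : B t ⊆ ⋃ t, B t := Set.subset_iUnion B t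
  have hlocal (t) {a b : V} (ha : a ∈ B t) (hb : b ∈ B t) :
      (G.induce (⋃ t, B t)).Reachable ⟨a, hsub t ha⟩ ⟨b, hsub t hb⟩ :=
    ((hconn t).preconnected ⟨a, ha⟩ ⟨b, hb⟩).map (G.induceHomOfLE (hsub t)).toHom
  obtain ⟨⟨x, hx⟩⟩ := (hconn 0).nonempty
  have hreach (t) : ∀ v (hv : v ∈ B t),
      (G.induce (⋃ t, B t)).Reachable ⟨x, hsub 0 hx⟩ ⟨v, hsub t hv⟩ := by
    induction t using Fin.induction with
    | zero => exact fun v hv => hlocal 0 hx hv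
    | succ t ih =>
      obtain ⟨a, ha, b, hb, hab⟩ := hsucc t
      exact fun v hv => (ih a ha).trans
        ((Adj.reachable (by exact hab : (G.induce _).Adj ⟨a, hsub _ ha⟩ ⟨b, hsub _ hb⟩)).trans
          (hlocal _ hb hv))
  rintro ⟨u, hu⟩ ⟨v, hv⟩
  obtain ⟨s, hs⟩ := Set.mem_iUnion.1 hu
  obtain ⟨t, ht⟩ := Set.mem_iUnion.1 hv
  exact (hreach s u hs).symm.trans (hreach t v ht)

lemma le_add_dist_induce_iUnion {k : ℕ} {B : Fin k → Set V}
    (hdisj : ∀ s t, s ≠ t → Disjoint (B s) (B t))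
    (hstep : ∀ s t, ∀ a ∈ B s, ∀ b ∈ B t, G.Adj a b → t.val ≤ s.val + 1)
    {x y : ⋃ t, B t} (hxy : (G.induce (⋃ t, B t)).Reachable x y)
    {s t : Fin k} (hx : x.1 ∈ B s) (hy : y.1 ∈ B t) :
    t.val ≤ s.val + (G.induce (⋃ t, B t)).dist x y := by
  choose lev hlev using fun v : ⋃ t, B t => Set.mem_iUnion.1 v.2
  have lev_eq {v : ⋃ t, B t} {t : Fin k} (hv : v.1 ∈ B t) : lev v = t := by
    by_contra hne
    exact Set.disjoint_left.1 (hdisj _ _ hne) (hlev v) hv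
  have := hxy.apply_le_apply_add_dist (f := fun v => (lev v).val)
    fun a b hab => hstep _ _ _ (hlev a) _ (hlev b) hab
  simpa only [lev_eq hx, lev_eq hy] using this

lemma exists_pathGraph_embedding_of_branchSets {k : ℕ} (B : Fin k → Set V)
    (hconn : ∀ t, (G.induce (B t)).Connected)
    (hdisj : ∀ s t, s ≠ t → Disjoint (B s) (B t))
    (hadj : ∀ s t, s ≠ t → ((pathGraph k).Adj s t ↔ ∃ a ∈ B s, ∃ b ∈ B t, G.Adj a b)) :
    ∃ f : pathGraph k ↪g G, ∀ j, f j ∈ ⋃ t, B t := by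
  obtain _ | m := k
  · exact ⟨⟨⟨isEmptyElim, isEmptyElim⟩, fun {a} => isEmptyElim a⟩, isEmptyElim⟩
  have hpre : (G.induce (⋃ t, B t)).Preconnected :=
    preconnected_induce_iUnion_of_adj_succ hconn fun t =>
      (hadj _ _ Fin.castSucc_lt_succ.ne).1 (by simp [pathGraph_adj])
  have hstep (s t : Fin (m + 1)) (a) (ha : a ∈ B s) (b) (hb : b ∈ B t) (hab : G.Adj a b) :
      t.val ≤ s.val + 1 := by
    by_cases hst : s = t
    · rw [hst]; omega
    · have := (hadj s t hst).2 ⟨a, ha, b, hb, hab⟩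
      rw [pathGraph_adj] at this
      omega
  obtain ⟨⟨x, hx⟩⟩ := (hconn 0).nonempty
  obtain ⟨⟨y, hy⟩⟩ := (hconn (Fin.last m)).nonempty
  let x' : ⋃ t, B t := ⟨x, Set.mem_iUnion_of_mem _ hx⟩
  let y' : ⋃ t, B t := ⟨y, Set.mem_iUnion_of_mem _ hy⟩
  have hdist := le_add_dist_induce_iUnion hdisj hstep (hpre x' y') hx hy
  obtain ⟨g⟩ := (hpre x' y').nonempty_pathGraph_embedding (k := m + 1) (by simpa using hdist)
  exact ⟨g.trans (Embedding.induce _), fun j => (g j).2⟩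

protected lemma IsIndContained.isInducedMinor {W : Type*} {H : SimpleGraph W} (h : H ⊴ G) :
    IsInducedMinor G H := by
  obtain ⟨f⟩ := h
  refine ⟨fun w => {f w}, fun w => ?_, fun w w' hne => ?_, fun w w' _ => ?_⟩
  · exact (induce_singleton_eq_top G (f w)).symm ▸ connected_top
  · exact Set.disjoint_singleton.2 (f.injective.ne hne)
  · simp

end SimpleGraph

open SimpleGraph

lemma linForest_adj {n : ℕ} {l : Fin n → ℕ} {i j : Fin n} {s : Fin (l i)} {t : Fin (l j)} :
    (linForest n l).Adj ⟨i, s⟩ ⟨j, t⟩ ↔ i = j ∧ (s.val + 1 = t.val ∨ t.val + 1 = s.val) := by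
  simp only [linForest, fromRel_adj]
  constructor
  · rintro ⟨-, ⟨rfl, h⟩ | ⟨rfl, h⟩⟩ <;> simp [h]
  · rintro ⟨rfl, h⟩
    refine ⟨fun hst => ?_, by simpa using h⟩
    cases hst
    omega

lemma linForest_adj_mk_mk_self {n : ℕ} {l : Fin n → ℕ} {i : Fin n} {s t : Fin (l i)} :
    (linForest n l).Adj ⟨i, s⟩ ⟨i, t⟩ ↔ (pathGraph (l i)).Adj s t := by
  simp [linForest_adj, pathGraph_adj]

section

variable {V : Type*} {G : SimpleGraph V}

lemma linForest_isIndContained_of_separated {n : ℕ} {l : Fin n → ℕ}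
    (g : ∀ i, pathGraph (l i) ↪g G) (U : Fin n → Set V) (hgU : ∀ i j, g i j ∈ U i)
    (hsep : ∀ i i', i ≠ i' → ∀ a ∈ U i, ∀ b ∈ U i', a ≠ b ∧ ¬ G.Adj a b) :
    linForest n l ⊴ G := by
  have hinj : Function.Injective fun p : Σ i, Fin (l i) => g p.1 p.2 := by
    rintro ⟨i, s⟩ ⟨i', s'⟩ h
    by_cases hii : i = i'
    · subst hii
      exact congrArg _ ((g i).injective h)
    · exact absurd h (hsep i i' hii _ (hgU i s) _ (hgU i' s')).1
  refine ⟨⟨⟨_, hinj⟩, fun {p q} => ?_⟩⟩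
  obtain ⟨i, s⟩ := p
  obtain ⟨i', s'⟩ := q
  change G.Adj (g i s) (g i' s') ↔ _
  by_cases hii : i = i'
  · subst hii
    rw [linForest_adj_mk_mk_self, (g i).map_adj_iff]
  · simp only [linForest_adj, hii, false_and, iff_false]
    exact (hsep i i' hii _ (hgU i s) _ (hgU i' s')).2

lemma IsInducedMinor.linForest_isIndContained {n : ℕ} {l : Fin n → ℕ}
    (h : IsInducedMinor G (linForest n l)) : linForest n l ⊴ G := by
  obtain ⟨B, hconn, hdisj, hadj⟩ := h
  have hne {i : Fin n} {s t : Fin (l i)} (hst : s ≠ t) :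
      (⟨i, s⟩ : Σ i, Fin (l i)) ≠ ⟨i, t⟩ := by simpa using hst
  choose g hg using fun i => exists_pathGraph_embedding_of_branchSets (fun t => B ⟨i, t⟩)
    (fun _ => hconn _) (fun s t hst => hdisj _ _ (hne hst))
    (fun s t hst => by rw [← linForest_adj_mk_mk_self, hadj _ _ (hne hst)])
  refine linForest_isIndContained_of_separated g (fun i => ⋃ t, B ⟨i, t⟩) hg ?_
  intro i i' hii a ha b hb
  obtain ⟨s, ha⟩ := Set.mem_iUnion.1 ha
  obtain ⟨t, hb⟩ := Set.mem_iUnion.1 hb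
  have hst : (⟨i, s⟩ : Σ i, Fin (l i)) ≠ ⟨i', t⟩ := fun h => hii (congrArg Sigma.fst h)
  refine ⟨fun hab => Set.disjoint_left.1 (hdisj _ _ hst) ha (hab ▸ hb), fun hab => hii ?_⟩
  exact (linForest_adj.1 ((hadj _ _ hst).2 ⟨a, ha, b, hb, hab⟩)).1

end

/-- If `H` is a linear forest, then `G` contains `H` as an induced subgraph iff
`G` contains `H` as an induced minor. -/
theorem stmt3 {V : Type*} (G : SimpleGraph V) (n : ℕ) (l : Fin n → ℕ) :
    (∃ f : (Σ i : Fin n, Fin (l i)) ↪ V,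
        ∀ a b, G.Adj (f a) (f b) ↔ (linForest n l).Adj a b) ↔
      IsInducedMinor G (linForest n l) := by
  constructor
  · rintro ⟨f, hf⟩
    exact IsIndContained.isInducedMinor ⟨⟨f, hf _ _⟩⟩
  · intro h
    obtain ⟨F⟩ := h.linForest_isIndContained
    exact ⟨F.toEmbedding, fun _ _ => F.map_adj_iff⟩
end

section
/- Let H be a graph all of whose connected components are cycles of length at least 4. Then a graph G contains H as an induced minor if and only if the blob graph G° contains H as an induced minor. -/
/-- The blob graph `G°` of `G`. -/
def blobGraph {V : Type*} (G : SimpleGraph V) :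
    SimpleGraph {X : Set V // (G.induce X).Connected} :=
  SimpleGraph.fromRel (fun X Y => (G.induce (X.1 ∪ Y.1)).Connected)

/-- The disjoint union of `n` cycles, where the `i`-th cycle has `l i` vertices. -/
def cycleUnion (n : ℕ) (l : Fin n → ℕ) : SimpleGraph (Σ i : Fin n, Fin (l i)) :=
  SimpleGraph.fromRel (fun a b => a.1 = b.1 ∧ (a.2.val + 1) % l a.1 = b.2.val)


namespace BlobAux
variable {V : Type*} {G : SimpleGraph V} {s t : Set V} {u v : V}

/-- Reachability within a set `s`. -/
def RIn (G : SimpleGraph V) (s : Set V) (u v : V) : Prop :=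
  ∃ w : G.Walk u v, ∀ x ∈ w.support, x ∈ s

/-- Hand-rolled connectivity of a set. -/
def MConn (G : SimpleGraph V) (s : Set V) : Prop :=
  s.Nonempty ∧ ∀ u ∈ s, ∀ v ∈ s, RIn G s u v

theorem RIn.refl (h : u ∈ s) : RIn G s u u := ⟨SimpleGraph.Walk.nil, by simpa using h⟩

theorem RIn.symm (h : RIn G s u v) : RIn G s v u := by
  obtain ⟨w, hw⟩ := h
  exact ⟨w.reverse, by simpa using hw⟩

theorem RIn.trans {x : V} (h : RIn G s u v) (h' : RIn G s v x) : RIn G s u x := by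
  obtain ⟨w, hw⟩ := h; obtain ⟨w', hw'⟩ := h'
  refine ⟨w.append w', ?_⟩
  intro y hy
  rw [SimpleGraph.Walk.mem_support_append_iff] at hy
  rcases hy with hy | hy
  · exact hw y hy
  · exact hw' y hy

theorem RIn.mono (hst : s ⊆ t) (h : RIn G s u v) : RIn G t u v := by
  obtain ⟨w, hw⟩ := h; exact ⟨w, fun x hx => hst (hw x hx)⟩

theorem rin_of_adj (ha : u ∈ s) (hb : v ∈ s) (h : G.Adj u v) : RIn G s u v := by
  refine ⟨SimpleGraph.Walk.cons h SimpleGraph.Walk.nil, ?_⟩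
  intro x hx
  simp only [SimpleGraph.Walk.support_cons, SimpleGraph.Walk.support_nil,
    List.mem_cons, List.not_mem_nil, or_false] at hx
  rcases hx with rfl | rfl
  · exact ha
  · exact hb

theorem RIn.mem_left (h : RIn G s u v) : u ∈ s := by
  obtain ⟨w, hw⟩ := h; exact hw u w.start_mem_support

theorem RIn.mem_right (h : RIn G s u v) : v ∈ s := by
  obtain ⟨w, hw⟩ := h; exact hw v w.end_mem_support

theorem mconn_of_anchor (hu : u ∈ s) (h : ∀ a ∈ s, RIn G s u a) : MConn G s :=
  ⟨⟨u, hu⟩, fun a ha b hb => ((h a ha).symm).trans (h b hb)⟩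

/-- Walks in the induced graph give `RIn`. -/
theorem rin_of_induce_walk {s : Set V} : ∀ {a b : s} (_ : (G.induce s).Walk a b),
    RIn G s a.1 b.1
  | a, _, SimpleGraph.Walk.nil => RIn.refl a.2
  | a, b, SimpleGraph.Walk.cons h p => by
      rename_i y
      have hadj : G.Adj a.1 y.1 := by simpa using h
      exact (rin_of_adj a.2 y.2 hadj).trans (rin_of_induce_walk p)

theorem induce_reachable_of_rin {s : Set V} :
    ∀ {u v : V} (w : G.Walk u v), (∀ x ∈ w.support, x ∈ s) →
      ∀ (hu : u ∈ s) (hv : v ∈ s), (G.induce s).Reachable ⟨u, hu⟩ ⟨v, hv⟩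
  | _, _, SimpleGraph.Walk.nil => fun _ _ _ => by rfl
  | u, v, SimpleGraph.Walk.cons (v := y) h p => fun hs hu hv => by
      have hy : y ∈ s := hs y (by simp)
      have hadj : (G.induce s).Adj ⟨u, hu⟩ ⟨y, hy⟩ := by simpa using h
      exact (hadj.reachable).trans
        (induce_reachable_of_rin p (fun a ha => hs a (by simp [ha])) hy hv)

theorem mconn_iff {s : Set V} : MConn G s ↔ (G.induce s).Connected := by
  constructor
  · rintro ⟨⟨x, hx⟩, h⟩
    rw [SimpleGraph.connected_iff]
    refine ⟨?_, ⟨⟨x, hx⟩⟩⟩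
    rintro ⟨u, hu⟩ ⟨v, hv⟩
    obtain ⟨w, hw⟩ := h u hu v hv
    exact induce_reachable_of_rin w hw hu hv
  · intro hc
    obtain ⟨⟨x, hx⟩⟩ := hc.nonempty
    refine ⟨⟨x, hx⟩, fun u hu v hv => ?_⟩
    obtain ⟨w⟩ := hc.preconnected ⟨u, hu⟩ ⟨v, hv⟩
    exact rin_of_induce_walk w

theorem mconn_union_of_touch (hs : MConn G s) (ht : MConn G t)
    (h : ∃ a ∈ s, ∃ b ∈ t, a = b ∨ G.Adj a b) : MConn G (s ∪ t) := by
  obtain ⟨a, ha, b, hb, hab⟩ := h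
  have hsub : s ⊆ s ∪ t := Set.subset_union_left
  have htub : t ⊆ s ∪ t := Set.subset_union_right
  have hab' : RIn G (s ∪ t) a b := by
    rcases hab with rfl | hab
    · exact RIn.refl (hsub ha)
    · exact rin_of_adj (hsub ha) (htub hb) hab
  refine mconn_of_anchor (hsub ha) ?_
  rintro c (hc | hc)
  · exact (hs.2 a ha c hc).mono hsub
  · exact hab'.trans (((ht.2 b hb c hc)).mono htub)

theorem mconn_singleton (v : V) : MConn G {v} := by
  refine ⟨⟨v, rfl⟩, ?_⟩
  rintro u rfl w hw
  rw [Set.mem_singleton_iff] at hw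
  subst hw
  exact RIn.refl rfl

theorem mconn_pair (h : G.Adj u v) : MConn G {u, v} := by
  refine mconn_of_anchor (u := u) (by simp) ?_
  intro a ha
  simp only [Set.mem_insert_iff, Set.mem_singleton_iff] at ha
  rcases ha with rfl | rfl
  · exact RIn.refl (by simp)
  · exact rin_of_adj (by simp) (by simp) h

theorem adj_of_mconn_pair (hne : u ≠ v) (h : MConn G {u, v}) : G.Adj u v := by
  obtain ⟨w, hw⟩ := h.2 u (by simp) v (by simp)
  clear h
  cases w with
  | nil => exact absurd rfl hne
  | @cons _ c _ hadj p =>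
      have hc : c ∈ ({u, v} : Set V) := hw c (by simp)
      simp only [Set.mem_insert_iff, Set.mem_singleton_iff] at hc
      rcases hc with rfl | rfl
      · exact absurd hadj (G.irrefl)
      · exact hadj

/-- Find a "boundary" pair between `s` and `t` along a walk in `s ∪ t`. -/
theorem exists_boundary : ∀ {u v : V} (w : G.Walk u v), u ∈ s → v ∈ t →
    (∀ x ∈ w.support, x ∈ s ∪ t) → ∃ a ∈ s, ∃ b ∈ t, a = b ∨ G.Adj a b
  | u, _, SimpleGraph.Walk.nil => fun hu hv _ => ⟨u, hu, u, hv, Or.inl rfl⟩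
  | u, v, SimpleGraph.Walk.cons (v := y) h p => fun hu hv hsup => by
      by_cases hyt : y ∈ t
      · exact ⟨u, hu, y, hyt, Or.inr h⟩
      · have hy : y ∈ s ∪ t := hsup y (by simp)
        have hys : y ∈ s := hy.resolve_right hyt
        exact exists_boundary p hys hv (fun a ha => hsup a (by simp [ha]))

theorem mconn_touch (h : MConn G (s ∪ t)) (hs : s.Nonempty) (ht : t.Nonempty) :
    ∃ a ∈ s, ∃ b ∈ t, a = b ∨ G.Adj a b := by
  obtain ⟨u, hu⟩ := hs; obtain ⟨v, hv⟩ := ht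
  obtain ⟨w, hw⟩ := h.2 u (Or.inl hu) v (Or.inr hv)
  exact exists_boundary w hu hv hw

/-- Truncation of a walk at the first vertex satisfying `P`. -/
theorem exists_prefix (P : V → Prop) {s : Set V} :
    ∀ {u v : V} (w : G.Walk u v), (∀ x ∈ w.support, x ∈ s) → P v →
    ∃ x, ∃ D : Set V, u ∈ D ∧ x ∈ D ∧ D ⊆ s ∧ MConn G D ∧ P x ∧
      (∀ y ∈ D, P y → y = x) ∧ (x = u ∨ ∃ y ∈ D, ¬P y ∧ G.Adj y x)
  | u, _, SimpleGraph.Walk.nil => fun hsup hP =>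
      ⟨u, {u}, rfl, rfl, by simpa using hsup u (by simp), mconn_singleton u, hP,
        fun y hy _ => hy, Or.inl rfl⟩
  | u, v, SimpleGraph.Walk.cons (v := c) h p => fun hsup hP => by
      by_cases hPu : P u
      · exact ⟨u, {u}, rfl, rfl, by simpa using hsup u (by simp), mconn_singleton u, hPu,
          fun y hy _ => hy, Or.inl rfl⟩
      · obtain ⟨x', D, hcD, hx'D, hDs, hDconn, hPx', hfirst, hlast⟩ :=
          exists_prefix P p (fun a ha => hsup a (by simp [ha])) hP
        have hus : u ∈ s := hsup u (by simp)
        refine ⟨x', insert u D, Set.mem_insert _ _, Set.mem_insert_of_mem _ hx'D,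
          ?_, ?_, hPx', ?_, ?_⟩
        · rintro a (rfl | ha)
          · exact hus
          · exact hDs ha
        · refine mconn_of_anchor (Set.mem_insert _ _) ?_
          rintro a (rfl | ha)
          · exact RIn.refl (Set.mem_insert _ _)
          · exact (rin_of_adj (Set.mem_insert _ _) (Set.mem_insert_of_mem _ hcD) h).trans
              ((hDconn.2 c hcD a ha).mono (Set.subset_insert _ _))
        · rintro a (rfl | ha) hPa
          · exact absurd hPa hPu
          · exact hfirst a ha hPa
        · rcases hlast with rfl | ⟨y', hy', hPy', hadj⟩
          · exact Or.inr ⟨u, Set.mem_insert _ _, hPu, h⟩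
          · exact Or.inr ⟨y', Set.mem_insert_of_mem _ hy', hPy', hadj⟩


/-! ### Blob graph lemmas -/

theorem blobGraph_adj_iff {X Y : {X : Set V // (G.induce X).Connected}} :
    (blobGraph G).Adj X Y ↔ X ≠ Y ∧ MConn G (X.1 ∪ Y.1) := by
  rw [blobGraph, SimpleGraph.fromRel_adj]
  constructor
  · rintro ⟨hne, h | h⟩
    · exact ⟨hne, mconn_iff.mpr h⟩
    · exact ⟨hne, by rw [Set.union_comm]; exact mconn_iff.mpr h⟩
  · rintro ⟨hne, h⟩
    exact ⟨hne, Or.inl (mconn_iff.mp h)⟩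

theorem blob_mconn (X : {X : Set V // (G.induce X).Connected}) : MConn G X.1 :=
  mconn_iff.mpr X.2

/-- singleton blob -/
def sblob (G : SimpleGraph V) (v : V) : {X : Set V // (G.induce X).Connected} :=
  ⟨{v}, mconn_iff.mp (mconn_singleton v)⟩

theorem sblob_adj {a b : V} (h : G.Adj a b) : (blobGraph G).Adj (sblob G a) (sblob G b) := by
  rw [blobGraph_adj_iff]
  refine ⟨?_, ?_⟩
  · intro hab
    have : ({a} : Set V) = {b} := congrArg Subtype.val hab
    exact h.ne (Set.singleton_eq_singleton_iff.mp this)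
  · show MConn G (({a} : Set V) ∪ {b})
    rw [Set.singleton_union]
    exact mconn_pair h

variable (G) in
def sblobs (B : Set V) : Set {X : Set V // (G.induce X).Connected} :=
  {X | ∃ w ∈ B, X.1 = {w}}

theorem sblob_mem {B : Set V} {v : V} (h : v ∈ B) : sblob G v ∈ sblobs G B := ⟨v, h, rfl⟩

theorem rin_sblob {B : Set V} :
    ∀ {u v : V} (w : G.Walk u v), (∀ x ∈ w.support, x ∈ B) →
    RIn (blobGraph G) (sblobs G B) (sblob G u) (sblob G v)
  | u, _, SimpleGraph.Walk.nil => fun hsup =>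
      RIn.refl (sblob_mem (hsup u (by simp)))
  | u, v, SimpleGraph.Walk.cons (v := c) h p => fun hsup => by
      refine (rin_of_adj (sblob_mem (hsup u (by simp))) (sblob_mem (hsup c (by simp)))
        (sblob_adj h)).trans (rin_sblob p (fun a ha => hsup a (by simp [ha])))

theorem adj_of_mconn_union {a b : V} (hne : a ≠ b) (h : MConn G (({a} : Set V) ∪ {b})) :
    G.Adj a b := by
  rw [Set.singleton_union] at h
  exact adj_of_mconn_pair hne h

theorem mconn_biUnion_key {B : Set {X : Set V // (G.induce X).Connected}}
    {C : Set V} (hsub : ∀ X ∈ B, X.1 ⊆ C) :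
    ∀ {X Y : {X : Set V // (G.induce X).Connected}} (w : (blobGraph G).Walk X Y),
      (∀ Z ∈ w.support, Z ∈ B) → ∀ u ∈ X.1, ∀ v ∈ Y.1, RIn G C u v
  | X, _, SimpleGraph.Walk.nil => fun hsup u hu v hv =>
      ((blob_mconn X).2 u hu v hv).mono (hsub X (hsup X (by simp)))
  | X, Y, SimpleGraph.Walk.cons (v := Z) h p => fun hsup u hu v hv => by
      have hZB : Z ∈ B := hsup Z (by simp)
      have hXB : X ∈ B := hsup X (by simp)
      obtain ⟨hne, hu12⟩ := blobGraph_adj_iff.mp h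
      obtain ⟨z, hz⟩ := (blob_mconn Z).1
      have h1 : RIn G C u z :=
        (hu12.2 u (Or.inl hu) z (Or.inr hz)).mono
          (Set.union_subset (hsub X hXB) (hsub Z hZB))
      exact h1.trans (mconn_biUnion_key hsub p (fun a ha => hsup a (by simp [ha])) z hz v hv)

/-- The union of all blobs in a blob-connected family is `MConn`. -/
theorem mconn_biUnion {B : Set {X : Set V // (G.induce X).Connected}}
    (hB : MConn (blobGraph G) B) : MConn G (⋃ X ∈ B, X.1) := by
  classical
  have hsub : ∀ X ∈ B, X.1 ⊆ (⋃ X ∈ B, X.1 : Set V) := fun X hX => Set.subset_biUnion_of_mem hX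
  obtain ⟨X0, hX0⟩ := hB.1
  obtain ⟨x0, hx0⟩ := (blob_mconn X0).1
  refine ⟨⟨x0, Set.mem_biUnion hX0 hx0⟩, ?_⟩
  intro u hu v hv
  obtain ⟨X, hX, hu⟩ := Set.mem_iUnion₂.mp hu
  obtain ⟨Y, hY, hv⟩ := Set.mem_iUnion₂.mp hv
  obtain ⟨w, hw⟩ := hB.2 X hX Y hY
  exact mconn_biUnion_key hsub w hw u hu v hv

/-- Easy direction: any induced minor of `G` is an induced minor of the blob graph. -/
theorem forward_dir {W : Type*} {H : SimpleGraph W} (h : IsInducedMinor G H) :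
    IsInducedMinor (blobGraph G) H := by
  classical
  obtain ⟨B, hconn, hdisj, hadj⟩ := h
  refine ⟨fun w => sblobs G (B w), ?_, ?_, ?_⟩
  · intro w
    rw [← mconn_iff]
    have hm : MConn G (B w) := mconn_iff.mpr (hconn w)
    obtain ⟨v0, hv0⟩ := hm.1
    refine mconn_of_anchor (u := sblob G v0) (sblob_mem hv0) ?_
    rintro X ⟨v, hv, hXv⟩
    have hX : X = sblob G v := Subtype.ext (by simpa [sblob] using hXv)
    subst hX
    obtain ⟨wk, hwk⟩ := hm.2 v0 hv0 v hv
    exact rin_sblob wk hwk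
  · intro w w' hww
    rw [Set.disjoint_left]
    rintro X ⟨v, hv, hXv⟩ ⟨v', hv', hXv'⟩
    have : v = v' := Set.singleton_eq_singleton_iff.mp (hXv ▸ hXv')
    subst this
    exact Set.disjoint_left.mp (hdisj w w' hww) hv hv'
  · intro w w' hww
    rw [hadj w w' hww]
    constructor
    · rintro ⟨a, ha, b, hb, hab⟩
      exact ⟨sblob G a, sblob_mem ha, sblob G b, sblob_mem hb, sblob_adj hab⟩
    · rintro ⟨X, ⟨a, ha, hXa⟩, Y, ⟨b, hb, hYb⟩, hXY⟩
      obtain ⟨hne, hm⟩ := blobGraph_adj_iff.mp hXY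
      rw [hXa, hYb] at hm
      have hab : a ≠ b := by
        rintro rfl
        exact hne (Subtype.ext (hXa.trans hYb.symm))
      exact ⟨a, ha, b, hb, adj_of_mconn_union hab hm⟩


/-! ### Cycle repair -/

/-- Grow a connected segment from `z` inside `Cset`, stopping just before the
"target" set `T`. -/
theorem build_seg {Cset T : Set V} {z : V} (hz : z ∈ Cset) (hzT : z ∉ T)
    (hCm : MConn G Cset) (htar : ∃ a ∈ Cset, a ∈ T ∨ ∃ b ∈ T, G.Adj a b) :
    ∃ D : Set V, ∃ x ∈ D, z ∈ D ∧ D ⊆ Cset ∧ MConn G D ∧ (∀ y ∈ D, y ∉ T) ∧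
      ∃ c ∈ T, G.Adj x c := by
  classical
  obtain ⟨a, haC, haP⟩ := htar
  obtain ⟨w, hw⟩ := hCm.2 z hz a haC
  obtain ⟨x, D, hzD, hxD, hDs, hDconn, hPx, hfirst, hlast⟩ :=
    exists_prefix (fun y => y ∈ T ∨ ∃ b ∈ T, G.Adj y b) w hw haP
  have hxT : x ∉ T := by
    intro hxT
    rcases hlast with rfl | ⟨y, hyD, hPy, hadj⟩
    · exact hzT hxT
    · exact hPy (Or.inr ⟨x, hxT, hadj⟩)
  refine ⟨D, x, hxD, hzD, hDs, hDconn, ?_, ?_⟩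
  · intro y hy hyT
    exact hxT ((hfirst y hy (Or.inl hyT)) ▸ hyT)
  · rcases hPx with h | h
    · exact absurd h hxT
    · exact h

theorem cycle_repair (k : ℕ) (hk : 4 ≤ k) (C : ℕ → Set V)
    (h1 : ∀ i < k, MConn G (C i))
    (h2 : ∀ i < k, MConn G (C i ∪ C ((i+1) % k)))
    (h3 : ∀ i j, i < k → j < k → i ≠ j → (i+1) % k ≠ j → (j+1) % k ≠ i →
      (∀ x ∈ C i, x ∉ C j) ∧ (∀ x ∈ C i, ∀ y ∈ C j, ¬G.Adj x y)) :
    ∃ D : ℕ → Set V, (∀ i < k, D i ⊆ C i) ∧ (∀ i < k, MConn G (D i)) ∧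
      (∀ i j, i < k → j < k → i ≠ j → ∀ x ∈ D i, x ∉ D j) ∧
      (∀ i < k, ∃ a ∈ D i, ∃ b ∈ D ((i+1) % k), G.Adj a b) := by
  classical
  -- the chain invariant
  have chain : ∀ m, 2 ≤ m → m ≤ k - 1 →
      ∃ D : ℕ → Set V, ∃ x : V,
        (∀ i, 2 ≤ i → i ≤ m →
          D i ⊆ C i ∧ MConn G (D i) ∧ ∀ y ∈ D i, y ∉ C ((i+1) % k)) ∧
        (∀ i, 2 ≤ i → i < m → ∃ a ∈ D i, ∃ b ∈ D (i+1), G.Adj a b) ∧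
        x ∈ D m ∧ (∃ c ∈ C ((m+1) % k), G.Adj x c) ∧
        (∃ z ∈ D 2, ∃ u ∈ C 1, u = z ∨ G.Adj u z) := by
    intro m hm2
    induction m, hm2 using Nat.le_induction with
    | base =>
        intro _
        have e12 : (1+1) % k = 2 := Nat.mod_eq_of_lt (by omega)
        have e23 : (2+1) % k = 3 := Nat.mod_eq_of_lt (by omega)
        -- touch C 1, C 2
        obtain ⟨u, hu, z, hz, huz⟩ := mconn_touch (by simpa [e12] using h2 1 (by omega))
          (h1 1 (by omega)).1 (h1 2 (by omega)).1
        -- z ∉ C 3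
        have h13 := h3 1 3 (by omega) (by omega) (by omega) (by omega)
          (by rcases Nat.lt_or_ge 4 k with h | h
              · rw [Nat.mod_eq_of_lt h]; omega
              · have : k = 4 := by omega
                simp [this])
        have hz3 : z ∉ C 3 := by
          intro hz3
          rcases huz with heq | huz
          · exact (h13.1 z (heq ▸ hu)) hz3
          · exact (h13.2 u hu z hz3) huz
        -- target in C 2 touching C 3
        obtain ⟨a, ha, b, hb, hab⟩ := mconn_touch (by simpa [e23] using h2 2 (by omega))
          (h1 2 (by omega)).1 (h1 3 (by omega)).1
        have htar2 : a ∈ C 3 ∨ ∃ b' ∈ C 3, G.Adj a b' := by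
          rcases hab with rfl | hab
          · exact Or.inl hb
          · exact Or.inr ⟨b, hb, hab⟩
        obtain ⟨D2, x, hxD, hzD, hD2, hDconn, hDav, c, hc, hxc⟩ :=
          build_seg hz hz3 (h1 2 (by omega)) ⟨a, ha, htar2⟩
        refine ⟨fun i => if i = 2 then D2 else ∅, x, ?_, ?_, ?_, ?_, ?_⟩
        · intro i h2i hi2
          have : i = 2 := by omega
          subst this
          simp only [if_pos rfl]
          exact ⟨hD2, hDconn, by simpa [e23] using hDav⟩
        · intro i h2i hi2; omega
        · simpa using hxD
        · exact ⟨c, by simpa [e23] using hc, hxc⟩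
        · exact ⟨z, by simpa using hzD, u, hu, huz⟩
    | succ m hm ih =>
        intro hmk
        obtain ⟨D, x, ha, hb, hxm, ⟨c, hc, hxc⟩, hstart⟩ := ih (by omega)
        have em1 : (m+1) % k = m+1 := Nat.mod_eq_of_lt (by omega)
        rw [em1] at hc
        -- z := c ∈ C (m+1), z ∉ C ((m+2) % k)
        have hxCm : x ∈ C m := (ha m (by omega) (by omega)).1 hxm
        have hanti : ∀ y ∈ C m, ∀ w ∈ C ((m+2) % k), ¬G.Adj y w := by
          rcases Nat.lt_or_ge (m+2) k with h | h
          · rw [Nat.mod_eq_of_lt h]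
            refine (h3 m (m+2) (by omega) h (by omega) (by omega) ?_).2
            rcases Nat.lt_or_ge (m+3) k with h' | h'
            · rw [Nat.mod_eq_of_lt h']; omega
            · have : m + 3 = k := by omega
              rw [this, Nat.mod_self]; omega
          · have hm2 : m + 2 = k := by omega
            have : (m+2) % k = 0 := by rw [hm2, Nat.mod_self]
            rw [this]
            refine (h3 m 0 (by omega) (by omega) (by omega) ?_ ?_).2
            · rw [em1]; omega
            · rw [Nat.mod_eq_of_lt (by omega)]; omega
        have hzC2 : c ∉ C ((m+2) % k) := fun hcc => hanti x hxCm c hcc hxc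
        -- touch C (m+1), C ((m+2) % k)
        have e2 : ((m+1)+1) % k = (m+2) % k := by ring_nf
        obtain ⟨a', ha', b', hb', hab'⟩ := mconn_touch
          (by simpa [e2] using h2 (m+1) (by omega))
          (h1 (m+1) (by omega)).1 (h1 ((m+2) % k) (Nat.mod_lt _ (by omega))).1
        have htarS : a' ∈ C ((m+2) % k) ∨ ∃ b'' ∈ C ((m+2) % k), G.Adj a' b'' := by
          rcases hab' with rfl | hab'
          · exact Or.inl hb'
          · exact Or.inr ⟨b', hb', hab'⟩
        obtain ⟨DS, x', hx'D, hcD, hDS, hDSconn, hDSav, c', hc', hx'c⟩ :=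
          build_seg hc hzC2 (h1 (m+1) (by omega)) ⟨a', ha', htarS⟩
        refine ⟨Function.update D (m+1) DS, x', ?_, ?_, ?_, ?_, ?_⟩
        · intro i h2i him
          rcases Nat.lt_or_ge i (m+1) with hi | hi
          · rw [Function.update_of_ne (by omega)]
            exact ha i h2i (by omega)
          · have : i = m+1 := by omega
            subst this
            rw [Function.update_self]
            exact ⟨hDS, hDSconn, by
              intro y hy
              have := hDSav y hy
              rw [e2]
              exact this⟩
        · intro i h2i him
          rcases Nat.lt_or_ge i m with hi | hi
          · rw [Function.update_of_ne (by omega), Function.update_of_ne (by omega)]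
            exact hb i h2i hi
          · have : i = m := by omega
            subst this
            rw [Function.update_of_ne (by omega), Function.update_self]
            exact ⟨x, hxm, c, hcD, hxc⟩
        · rw [Function.update_self]; exact hx'D
        · exact ⟨c', by rw [e2] at hc'; exact hc', hx'c⟩
        · obtain ⟨z, hz, u, hu, huz⟩ := hstart
          exact ⟨z, by rw [Function.update_of_ne (by omega)]; exact hz, u, hu, huz⟩
  -- apply the chain up to k - 1
  obtain ⟨D, xe, hDa, hDb, hxe, ⟨w, hw, hxw⟩, z2, hz2, u, hu, huz2⟩ :=
    chain (k-1) (by omega) le_rfl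
  have ek : ((k-1)+1) % k = 0 := by
    have : (k-1)+1 = k := by omega
    rw [this, Nat.mod_self]
  rw [ek] at hw
  -- w ∈ C 0, w ∉ C 1
  have hxeC : xe ∈ C (k-1) := (hDa (k-1) (by omega) le_rfl).1 hxe
  have hw1 : w ∉ C 1 := by
    intro hw1
    have h31 := h3 (k-1) 1 (by omega) (by omega) (by omega)
      (by rw [ek]; omega) (by rw [Nat.mod_eq_of_lt (by omega)]; omega)
    exact h31.2 xe hxeC w hw1 hxw
  -- build D0 inside C 0, avoiding C 1
  have e01 : (0+1) % k = 1 := Nat.mod_eq_of_lt (by omega)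
  obtain ⟨p, hp, s0, hs0, hps⟩ := mconn_touch (by simpa [e01] using h2 0 (by omega))
    (h1 0 (by omega)).1 (h1 1 (by omega)).1
  have htar0 : p ∈ C 1 ∨ ∃ b'' ∈ C 1, G.Adj p b'' := by
    rcases hps with rfl | hps
    · exact Or.inl hs0
    · exact Or.inr ⟨s0, hs0, hps⟩
  obtain ⟨D0, q, hqD0, hwD0, hD0, hD0conn, hD0av, s', hs', hqs'⟩ :=
    build_seg hw hw1 (h1 0 (by omega)) ⟨p, hp, htar0⟩
  -- s' ∈ C 1, s' ∉ D 2
  have hD2C : D 2 ⊆ C 2 := (hDa 2 (by omega) (by omega)).1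
  have hs'D2 : s' ∉ D 2 := by
    intro hsD2
    have h02 := h3 0 2 (by omega) (by omega) (by omega)
      (by rw [e01]; omega)
      (by rw [Nat.mod_eq_of_lt (by omega)]; omega)
    exact h02.2 q (hD0 hqD0) s' (hD2C hsD2) hqs'
  -- build D1 inside C 1, avoiding D 2
  have htar1 : u ∈ D 2 ∨ ∃ b'' ∈ D 2, G.Adj u b'' := by
    rcases huz2 with rfl | huz2
    · exact Or.inl hz2
    · exact Or.inr ⟨z2, hz2, huz2⟩
  obtain ⟨D1, q', hq'D1, hs'D1, hD1, hD1conn, hD1av, b', hb', hq'b⟩ :=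
    build_seg hs' hs'D2 (h1 1 (by omega)) ⟨u, hu, htar1⟩
  -- final family
  set Df : ℕ → Set V := fun i => if i = 0 then D0 else if i = 1 then D1 else D i with hDf
  have hDfg : ∀ i, 2 ≤ i → Df i = D i := by
    intro i hi
    simp only [hDf]
    rw [if_neg (by omega), if_neg (by omega)]
  have hDfsub : ∀ i, i < k → Df i ⊆ C i := by
    intro i hik
    rcases Nat.lt_or_ge i 2 with hi | hi
    · interval_cases i
      · simpa [hDf] using hD0
      · simpa [hDf] using hD1
    · have : Df i = D i := hDfg i (by omega)
      rw [this]
      exact (hDa i hi (by omega)).1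
  -- one-sided consecutive disjointness
  have hcons : ∀ i, i < k → ∀ x ∈ Df i, x ∉ Df ((i+1) % k) := by
    intro i hik x hx
    rcases Nat.lt_or_ge i 2 with hi | hi
    · interval_cases i
      · rw [e01]
        intro hx1
        have hx1' : x ∈ D1 := by simpa [hDf] using hx1
        exact hD0av x (by simpa [hDf] using hx) (hD1 hx1')
      · have e12 : (1+1) % k = 2 := Nat.mod_eq_of_lt (by omega)
        rw [e12]
        intro hx2
        have hx2' : x ∈ D 2 := by
          have : Df 2 = D 2 := hDfg 2 (by omega)
          rwa [this] at hx2
        exact hD1av x (by simpa [hDf] using hx) hx2'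
    · have hxD : x ∈ D i := by
        have : Df i = D i := hDfg i (by omega)
        rwa [this] at hx
      have hav := (hDa i hi (by omega)).2.2 x hxD
      rcases Nat.lt_or_ge (i+1) k with h | h
      · rw [Nat.mod_eq_of_lt h]
        rw [Nat.mod_eq_of_lt h] at hav
        intro hxn
        have : Df (i+1) = D (i+1) := hDfg (i+1) (by omega)
        rw [this] at hxn
        exact hav ((hDa (i+1) (by omega) (by omega)).1 hxn)
      · have : i = k-1 := by omega
        subst this
        rw [ek]
        rw [ek] at hav
        intro hx0
        exact hav (hD0 (by simpa [hDf] using hx0))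
  refine ⟨Df, hDfsub, ?_, ?_, ?_⟩
  · intro i hik
    rcases Nat.lt_or_ge i 2 with hi | hi
    · interval_cases i
      · simpa [hDf] using hD0conn
      · simpa [hDf] using hD1conn
    · have : Df i = D i := hDfg i (by omega)
      rw [this]
      exact (hDa i hi (by omega)).2.1
  · -- pairwise disjointness
    intro i j hik hjk hij x hxi hxj
    by_cases hc1 : (i+1) % k = j
    · exact hcons i hik x hxi (hc1 ▸ hxj)
    by_cases hc2 : (j+1) % k = i
    · exact hcons j hjk x hxj (hc2 ▸ hxi)
    · exact (h3 i j hik hjk hij hc1 hc2).1 x (hDfsub i hik hxi) (hDfsub j hjk hxj)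
  · -- consecutive edges
    intro i hik
    rcases Nat.lt_or_ge i 2 with hi | hi
    · interval_cases i
      · rw [e01]
        exact ⟨q, by simpa [hDf] using hqD0, s', by simpa [hDf] using hs'D1, hqs'⟩
      · have e12 : (1+1) % k = 2 := Nat.mod_eq_of_lt (by omega)
        rw [e12]
        refine ⟨q', by simpa [hDf] using hq'D1, b', ?_, hq'b⟩
        have : Df 2 = D 2 := hDfg 2 (by omega)
        rw [this]
        exact hb'
    · rcases Nat.lt_or_ge (i+1) k with h | h
      · rw [Nat.mod_eq_of_lt h]
        obtain ⟨a, haD, b, hbD, hab⟩ := hDb i hi (by omega)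
        refine ⟨a, ?_, b, ?_, hab⟩
        · have : Df i = D i := hDfg i (by omega)
          rw [this]; exact haD
        · have : Df (i+1) = D (i+1) := hDfg (i+1) (by omega)
          rw [this]; exact hbD
      · have : i = k-1 := by omega
        subst this
        rw [ek]
        refine ⟨xe, ?_, w, by simpa [hDf] using hwD0, hxw⟩
        have : Df (k-1) = D (k-1) := hDfg (k-1) (by omega)
        rw [this]; exact hxe

/-! ### Reverse direction -/

theorem sigma_ne {n : ℕ} {l : Fin n → ℕ} {i : Fin n} {x y : Fin (l i)} (h : x ≠ y) :
    (⟨i, x⟩ : Σ i, Fin (l i)) ≠ ⟨i, y⟩ := by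
  intro he
  apply h
  simpa using he

theorem cu_adj {n : ℕ} {l : Fin n → ℕ} {a b : Σ i, Fin (l i)} :
    (cycleUnion n l).Adj a b ↔ a ≠ b ∧
      ((a.1 = b.1 ∧ (a.2.1 + 1) % l a.1 = b.2.1) ∨ (b.1 = a.1 ∧ (b.2.1 + 1) % l b.1 = a.2.1)) :=
  SimpleGraph.fromRel_adj _ a b

theorem reverse_dir {n : ℕ} {l : Fin n → ℕ} (hl : ∀ i, 4 ≤ l i)
    (h : IsInducedMinor (blobGraph G) (cycleUnion n l)) :
    IsInducedMinor G (cycleUnion n l) := by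
  classical
  obtain ⟨B, hconn, hdisj, hadj⟩ := h
  set C : (Σ i : Fin n, Fin (l i)) → Set V := fun w => ⋃ X ∈ B w, X.1 with hCdef
  have hCm : ∀ w, MConn G (C w) := fun w => mconn_biUnion (mconn_iff.mpr (hconn w))
  have hsubC : ∀ w, ∀ X ∈ B w, X.1 ⊆ C w := fun w X hX => Set.subset_biUnion_of_mem hX
  -- non-adjacent branch sets are anticomplete and disjoint
  have hanti : ∀ w w', w ≠ w' → ¬(cycleUnion n l).Adj w w' →
      (∀ x ∈ C w, x ∉ C w') ∧ (∀ x ∈ C w, ∀ y ∈ C w', ¬G.Adj x y) := by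
    intro w w' hne hnadj
    have hXY : ∀ X ∈ B w, ∀ Y ∈ B w', ¬MConn G (X.1 ∪ Y.1) := by
      intro X hX Y hY hM
      have hneXY : X ≠ Y := fun heq =>
        Set.disjoint_left.mp (hdisj w w' hne) hX (heq ▸ hY)
      exact hnadj ((hadj w w' hne).mpr
        ⟨X, hX, Y, hY, blobGraph_adj_iff.mpr ⟨hneXY, hM⟩⟩)
    constructor
    · intro x hx hx'
      obtain ⟨X, hX, hxX⟩ := Set.mem_iUnion₂.mp hx
      obtain ⟨Y, hY, hxY⟩ := Set.mem_iUnion₂.mp hx'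
      exact hXY X hX Y hY (mconn_union_of_touch (blob_mconn X) (blob_mconn Y)
        ⟨x, hxX, x, hxY, Or.inl rfl⟩)
    · intro x hx y hy hxy
      obtain ⟨X, hX, hxX⟩ := Set.mem_iUnion₂.mp hx
      obtain ⟨Y, hY, hyY⟩ := Set.mem_iUnion₂.mp hy
      exact hXY X hX Y hY (mconn_union_of_touch (blob_mconn X) (blob_mconn Y)
        ⟨x, hxX, y, hyY, Or.inr hxy⟩)
  -- adjacent branch sets have connected union
  have hconns : ∀ w w', w ≠ w' → (cycleUnion n l).Adj w w' → MConn G (C w ∪ C w') := by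
    intro w w' hne hA
    obtain ⟨X, hX, Y, hY, hAb⟩ := (hadj w w' hne).mp hA
    obtain ⟨hneXY, hM⟩ := blobGraph_adj_iff.mp hAb
    obtain ⟨a, ha, b, hb, hab⟩ := mconn_touch hM (blob_mconn X).1 (blob_mconn Y).1
    exact mconn_union_of_touch (hCm w) (hCm w')
      ⟨a, hsubC w X hX ha, b, hsubC w' Y hY hb, hab⟩
  -- repair each cycle
  have hex : ∀ i : Fin n, ∃ D : ℕ → Set V,
      (∀ (j : ℕ) (hj : j < l i), D j ⊆ C ⟨i, ⟨j, hj⟩⟩) ∧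
      (∀ j < l i, MConn G (D j)) ∧
      (∀ j j', j < l i → j' < l i → j ≠ j' → ∀ x ∈ D j, x ∉ D j') ∧
      (∀ j < l i, ∃ a ∈ D j, ∃ b ∈ D ((j+1) % l i), G.Adj a b) := by
    intro i
    have hk := hl i
    set k := l i with hkdef
    set Cc : ℕ → Set V := fun j' => if h : j' < k then C ⟨i, ⟨j', h⟩⟩ else ∅ with hCc
    have hCceq : ∀ (j : ℕ) (hj : j < k), Cc j = C ⟨i, ⟨j, hj⟩⟩ := fun j hj => dif_pos hj
    have hmodlt : ∀ j : ℕ, (j+1) % k < k := fun j => Nat.mod_lt _ (by omega)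
    have hadjcons : ∀ (j : ℕ) (hj : j < k),
        (cycleUnion n l).Adj ⟨i, ⟨j, hj⟩⟩ ⟨i, ⟨(j+1) % k, hmodlt j⟩⟩ := by
      intro j hj
      rw [cu_adj]
      refine ⟨sigma_ne (fun he => ?_), Or.inl ⟨rfl, rfl⟩⟩
      have hv : j = (j+1) % k := congrArg Fin.val he
      rcases Nat.lt_or_ge (j+1) k with h' | h'
      · rw [Nat.mod_eq_of_lt h'] at hv; omega
      · have : j + 1 = k := by omega
        rw [this, Nat.mod_self] at hv; omega
    have hnadj : ∀ (j j' : ℕ) (hj : j < k) (hj' : j' < k), j ≠ j' →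
        (j+1) % k ≠ j' → (j'+1) % k ≠ j →
        ¬(cycleUnion n l).Adj ⟨i, ⟨j, hj⟩⟩ ⟨i, ⟨j', hj'⟩⟩ := by
      intro j j' hj hj' hne h1 h2 hA
      rw [cu_adj] at hA
      rcases hA.2 with ⟨_, hc⟩ | ⟨_, hc⟩
      · exact h1 hc
      · exact h2 hc
    have hy1 : ∀ j < k, MConn G (Cc j) := by
      intro j hj
      rw [hCceq j hj]
      exact hCm _
    have hy2 : ∀ j < k, MConn G (Cc j ∪ Cc ((j+1) % k)) := by
      intro j hj
      rw [hCceq j hj, hCceq _ (hmodlt j)]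
      exact hconns _ _ ((hadjcons j hj).ne) (hadjcons j hj)
    have hy3 : ∀ j j', j < k → j' < k → j ≠ j' → (j+1) % k ≠ j' → (j'+1) % k ≠ j →
        (∀ x ∈ Cc j, x ∉ Cc j') ∧ (∀ x ∈ Cc j, ∀ y ∈ Cc j', ¬G.Adj x y) := by
      intro j j' hj hj' hne h1 h2
      rw [hCceq j hj, hCceq j' hj']
      exact hanti _ _ (sigma_ne (fun he => hne (congrArg Fin.val he)))
        (hnadj j j' hj hj' hne h1 h2)
    obtain ⟨D, hsub, hmc, hdis, hedge⟩ := cycle_repair k hk Cc hy1 hy2 hy3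
    exact ⟨D, fun j hj => le_of_le_of_eq (hsub j hj) (hCceq j hj), hmc, hdis, hedge⟩
  choose Dc hDc using hex
  refine ⟨fun w => Dc w.1 w.2.1, ?_, ?_, ?_⟩
  · rintro ⟨i, j⟩
    exact mconn_iff.mp ((hDc i).2.1 j.1 j.isLt)
  · rintro ⟨i, j⟩ ⟨i', j'⟩ hne
    rw [Set.disjoint_left]
    by_cases hii : i = i'
    · subst hii
      have hjj : j.1 ≠ j'.1 := fun h =>
        hne (congrArg (fun x => (⟨i, x⟩ : Σ i, Fin (l i))) (Fin.val_injective h))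
      exact fun {x} hx => (hDc i).2.2.1 j.1 j'.1 j.isLt j'.isLt hjj x hx
    · intro x hx hx'
      have h1 : x ∈ C ⟨i, j⟩ := (hDc i).1 j.1 j.isLt hx
      have h2 : x ∈ C ⟨i', j'⟩ := (hDc i').1 j'.1 j'.isLt hx'
      have hnadj : ¬(cycleUnion n l).Adj ⟨i, j⟩ ⟨i', j'⟩ := by
        intro hA
        rw [cu_adj] at hA
        rcases hA.2 with ⟨hc, _⟩ | ⟨hc, _⟩
        · exact hii hc
        · exact hii hc.symm
      have hnew : (⟨i, j⟩ : Σ i, Fin (l i)) ≠ ⟨i', j'⟩ := by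
        intro he
        exact hii (congrArg Sigma.fst he)
      exact (hanti _ _ hnew hnadj).1 x h1 h2
  · rintro ⟨i, j⟩ ⟨i', j'⟩ hne
    constructor
    · intro hA
      rw [cu_adj] at hA
      rcases hA.2 with ⟨hc, hm⟩ | ⟨hc, hm⟩
      · -- i = i', (j+1) % k = j'
        have hii : i = i' := hc
        subst hii
        obtain ⟨a, ha, b, hb, hab⟩ := (hDc i).2.2.2 j.1 j.isLt
        refine ⟨a, ha, b, ?_, hab⟩
        simp only at hm
        rwa [hm] at hb
      · have hii : i' = i := hc
        subst hii
        obtain ⟨a, ha, b, hb, hab⟩ := (hDc i').2.2.2 j'.1 j'.isLt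
        refine ⟨b, ?_, a, ha, hab.symm⟩
        simp only at hm
        rwa [hm] at hb
    · rintro ⟨a, ha, b, hb, hab⟩
      by_contra hnadj
      have h1 : a ∈ C ⟨i, j⟩ := (hDc i).1 j.1 j.isLt ha
      have h2 : b ∈ C ⟨i', j'⟩ := (hDc i').1 j'.1 j'.isLt hb
      exact (hanti _ _ hne hnadj).2 a h1 b h2 hab

end BlobAux

/-- If every component of `H` is a cycle of length at least 4, then `G` contains `H`
as an induced minor iff the blob graph `G°` contains `H` as an induced minor. -/
theorem stmt5 {V : Type*} (G : SimpleGraph V) (n : ℕ) (l : Fin n → ℕ)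
    (hl : ∀ i, 4 ≤ l i) :
    IsInducedMinor G (cycleUnion n l) ↔
      IsInducedMinor (blobGraph G) (cycleUnion n l) := by
  exact ⟨fun h => BlobAux.forward_dir h, fun h => BlobAux.reverse_dir hl h⟩
end

section
/- Let G be a graph, w : V(G) → ℝ≥0 a weight function, and 𝓗 a class of graphs. Let 𝓧 = {X ⊆ V(G) : G[X] ∈ 𝓗 and G[X] is connected}, and define w°(X) = Σ_{v∈X} w(v). Then the maximum weight of an induced 𝓗-packing in G equals the maximum weight (under w°) of an independent set in the induced subgraph of the blob graph G° on vertex set 𝓧. -/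
/-- The vertex set (as a subset of `V`) of the connected component of `G[S]`
containing the vertex `v ∈ S`. -/
def compSet {V : Type*} (G : SimpleGraph V) (S : Set V) (v : ↥S) : Set V :=
  {u : V | ∃ hu : u ∈ S, (G.induce S).Reachable ⟨u, hu⟩ v}

open SimpleGraph

section

variable {V : Type*} {G : SimpleGraph V}

lemma reachable_induce_of_subset {s t : Set V} (hst : s ⊆ t) {a b : V} (ha : a ∈ s)
    (hb : b ∈ s) (h : (G.induce s).Reachable ⟨a, ha⟩ ⟨b, hb⟩) :
    (G.induce t).Reachable ⟨a, hst ha⟩ ⟨b, hst hb⟩ :=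
  h.map (G.induceHomOfLE hst).toHom

lemma mem_of_walk_induce_of_adj_closed {S X : Set V}
    (hX : ∀ a ∈ S, ∀ b ∈ X, G.Adj a b → a ∈ X) {a b : S} (p : (G.induce S).Walk a b)
    (hb : b.1 ∈ X) : a.1 ∈ X := by
  induction p with
  | nil => exact hb
  | cons hadj _ ih => exact hX _ (Subtype.prop _) _ (ih hb) hadj

variable (G) in
lemma mem_compSet_self (S : Set V) (v : S) : v.1 ∈ compSet G S v :=
  ⟨v.2, Reachable.refl v⟩

variable (G) in
lemma compSet_subset (S : Set V) (v : S) : compSet G S v ⊆ S :=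
  fun _ hu => hu.1

lemma compSet_eq_of_reachable {S : Set V} {v v' : S} (h : (G.induce S).Reachable v v') :
    compSet G S v = compSet G S v' := by
  ext u
  exact ⟨fun ⟨hu, hr⟩ => ⟨hu, hr.trans h⟩, fun ⟨hu, hr⟩ => ⟨hu, hr.trans h.symm⟩⟩

lemma compSet_eq_of_mem_of_mem {S : Set V} {v v' : S} {z : V} (hz : z ∈ compSet G S v)
    (hz' : z ∈ compSet G S v') : compSet G S v = compSet G S v' :=
  compSet_eq_of_reachable (hz.2.symm.trans hz'.2)

variable (G) in
lemma connected_induce_compSet (S : Set V) (v : S) : (G.induce (compSet G S v)).Connected := by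
  classical
  refine G.induce_connected_of_patches v.1 (mem_compSet_self G S v) fun ⟨_, ⟨p⟩⟩ => ?_
  let q := p.map (Embedding.induce S).toHom
  refine ⟨{y | y ∈ q.support}, fun y hy => ?_, q.end_mem_support, q.start_mem_support,
    q.connected_induce_support.preconnected _ _⟩
  rw [Set.mem_ofPred_eq, Walk.support_map, List.mem_map] at hy
  obtain ⟨z, hz, rfl⟩ := hy
  exact ⟨z.2, ⟨p.dropUntil z hz⟩⟩

lemma compSet_eq_of_connected_union {S : Set V} {v v' : S}
    (h : (G.induce (compSet G S v ∪ compSet G S v')).Connected) :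
    compSet G S v = compSet G S v' := by
  have hv : v.1 ∈ compSet G S v ∪ compSet G S v' := Or.inl (mem_compSet_self G S v)
  have hv' : v'.1 ∈ compSet G S v ∪ compSet G S v' := Or.inr (mem_compSet_self G S v')
  exact compSet_eq_of_reachable <|
    reachable_induce_of_subset (Set.union_subset (compSet_subset G S v) (compSet_subset G S v'))
      hv hv' (h.preconnected ⟨v.1, hv⟩ ⟨v'.1, hv'⟩)

lemma compSet_eq_of_adj_closed {S X : Set V} (hXS : X ⊆ S) (hX : (G.induce X).Preconnected)
    (hclosed : ∀ a ∈ S, ∀ b ∈ X, G.Adj a b → a ∈ X) {v : S} (hv : v.1 ∈ X) :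
    compSet G S v = X := by
  refine Set.Subset.antisymm (fun u ⟨_, ⟨p⟩⟩ => mem_of_walk_induce_of_adj_closed hclosed p hv)
    fun u hu => ⟨hXS hu, ?_⟩
  exact reachable_induce_of_subset hXS hu hv (hX ⟨u, hu⟩ ⟨v.1, hv⟩)

lemma blobGraph_adj_iff {X Y : {X : Set V // (G.induce X).Connected}} :
    (blobGraph G).Adj X Y ↔ X ≠ Y ∧ (G.induce (X.1 ∪ Y.1)).Connected := by
  rw [blobGraph, fromRel_adj, Set.union_comm Y.1, or_self]

variable (G) in
def componentBlobs (S : Set V) : Set {X : Set V // (G.induce X).Connected} :=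
  Set.range fun v : S => ⟨compSet G S v, connected_induce_compSet G S v⟩

variable (G) in
lemma biUnion_componentBlobs (S : Set V) : ⋃ X ∈ componentBlobs G S, X.1 = S := by
  refine Set.Subset.antisymm (Set.iUnion₂_subset ?_) fun u hu => ?_
  · rintro _ ⟨v, rfl⟩
    exact compSet_subset G S v
  · exact Set.mem_biUnion (Set.mem_range_self ⟨u, hu⟩) (mem_compSet_self G S ⟨u, hu⟩)

variable (G) in
lemma componentBlobs_pairwiseDisjoint (S : Set V) :
    (componentBlobs G S).PairwiseDisjoint Subtype.val := by
  rintro _ ⟨v, rfl⟩ _ ⟨v', rfl⟩ hne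
  exact Set.disjoint_left.2 fun _ hz hz' => hne (Subtype.ext (compSet_eq_of_mem_of_mem hz hz'))

variable (G) in
lemma isIndepSet_componentBlobs (S : Set V) : (blobGraph G).IsIndepSet (componentBlobs G S) := by
  rintro _ ⟨v, rfl⟩ _ ⟨v', rfl⟩ hne hadj
  exact hne (Subtype.ext (compSet_eq_of_connected_union (blobGraph_adj_iff.1 hadj).2))

variable {𝒮 : Set {X : Set V // (G.induce X).Connected}}

lemma SimpleGraph.IsIndepSet.pairwiseDisjoint_blobs (h𝒮 : (blobGraph G).IsIndepSet 𝒮) :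
    𝒮.PairwiseDisjoint Subtype.val := fun X hX Y hY hne =>
  Set.disjoint_left.2 fun z hzX hzY => h𝒮 hX hY hne <| blobGraph_adj_iff.2
    ⟨hne, induce_union_connected X.2.preconnected Y.2.preconnected ⟨z, hzX, hzY⟩⟩

lemma SimpleGraph.IsIndepSet.not_adj_of_mem_blobs (h𝒮 : (blobGraph G).IsIndepSet 𝒮)
    {X Y : {X : Set V // (G.induce X).Connected}} (hX : X ∈ 𝒮) (hY : Y ∈ 𝒮) (hne : X ≠ Y)
    {a b : V} (ha : a ∈ X.1) (hb : b ∈ Y.1) : ¬ G.Adj a b := fun hab =>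
  h𝒮 hX hY hne <| blobGraph_adj_iff.2
    ⟨hne, connected_induce_union X.2.preconnected Y.2.preconnected ha hb hab⟩

lemma SimpleGraph.IsIndepSet.compSet_biUnion_blobs (h𝒮 : (blobGraph G).IsIndepSet 𝒮)
    {X : {X : Set V // (G.induce X).Connected}} (hX : X ∈ 𝒮) {v : ↥(⋃ Y ∈ 𝒮, Y.1)}
    (hv : v.1 ∈ X.1) : compSet G (⋃ Y ∈ 𝒮, Y.1) v = X.1 := by
  refine compSet_eq_of_adj_closed (Set.subset_biUnion_of_mem hX) X.2.preconnected
    (fun a ha b hb hab => ?_) hv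
  obtain ⟨Y, hY, haY⟩ := Set.mem_iUnion₂.1 ha
  by_contra haX
  exact h𝒮.not_adj_of_mem_blobs hY hX (fun e => haX (e ▸ haY)) haY hb hab

end

/-- The maximum weight of an induced `𝓗`-packing in `G` (where `P X` encodes
`G[X] ∈ 𝓗`) equals the maximum weight of an independent set of the induced subgraph
of the blob graph `G°` on the vertices `X` with `G[X] ∈ 𝓗` and `G[X]` connected,
weighted by `w°(X) = Σ_{v ∈ X} w v`. -/
theorem stmt6 {V : Type*} [Fintype V] (G : SimpleGraph V) (w : V → NNReal)
    (P : Set V → Prop) :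
    sSup {r : NNReal | ∃ S : Set V,
        (∀ v : ↥S, P (compSet G S v)) ∧ r = ∑ᶠ v ∈ S, w v} =
      sSup {r : NNReal | ∃ 𝒮 : Set {X : Set V // (G.induce X).Connected},
        (∀ X ∈ 𝒮, P X.1) ∧
        (∀ X ∈ 𝒮, ∀ Y ∈ 𝒮, X ≠ Y → ¬ (blobGraph G).Adj X Y) ∧
        r = ∑ᶠ X ∈ 𝒮, ∑ᶠ v ∈ X.1, w v} := by
  congr 1
  ext r
  constructor
  · rintro ⟨S, hP, rfl⟩
    refine ⟨componentBlobs G S, Set.forall_mem_range.2 hP, isIndepSet_componentBlobs G S, ?_⟩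
    rw [← finsum_mem_biUnion (componentBlobs_pairwiseDisjoint G S) (Set.toFinite _)
      fun _ _ => Set.toFinite _, biUnion_componentBlobs]
  · rintro ⟨𝒮, hP, h𝒮 : (blobGraph G).IsIndepSet 𝒮, rfl⟩
    refine ⟨⋃ X ∈ 𝒮, X.1, fun v => ?_, (finsum_mem_biUnion h𝒮.pairwiseDisjoint_blobs
      (Set.toFinite _) fun _ _ => Set.toFinite _).symm⟩
    obtain ⟨X, hX, hvX⟩ := Set.mem_iUnion₂.1 v.2
    rw [h𝒮.compSet_biUnion_blobs hX hvX]
    exact hP X hX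
end

section
/- If 𝓢 is an independent set in the blob graph G° (i.e., the elements of 𝓢 are pairwise disjoint connected vertex sets with no edges of G between any two of them), and each G[X] for X ∈ 𝓢 belongs to a graph class 𝓗, then S = ⋃𝓢 satisfies: every connected component of G[S] is equal to G[X] for some X ∈ 𝓢; in particular S is an induced 𝓗-packing in G. -/
open SimpleGraph

section

variable {V : Type*} {G : SimpleGraph V}

lemma compSet_eq_of_forall_adj_mem {S X : Set V} (hX : (G.induce X).Connected) (hXS : X ⊆ S)
    (hclosed : ∀ a ∈ X, ∀ b ∈ S, G.Adj a b → b ∈ X) {v : ↥S} (hv : (v : V) ∈ X) :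
    compSet G S v = X := by
  ext u
  constructor
  · rintro ⟨hu, hreach⟩
    obtain ⟨w⟩ := hreach.symm
    suffices ∀ {a b : ↥S}, (G.induce S).Walk a b → (a : V) ∈ X → (b : V) ∈ X from this w hv
    intro a b w
    induction w with
    | nil => exact id
    | cons hac _ ih => exact fun ha => ih (hclosed _ ha _ (Subtype.prop _) hac)
  · intro hu
    exact ⟨hXS hu, (hX.preconnected ⟨u, hu⟩ ⟨v, hv⟩).map (induceHomOfLE G hXS).toHom⟩

lemma mem_of_adj_of_isIndepSet_blobGraph {𝒮 : Set {X : Set V // (G.induce X).Connected}}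
    (h𝒮 : (blobGraph G).IsIndepSet 𝒮) {X : {X : Set V // (G.induce X).Connected}} (hX : X ∈ 𝒮)
    {a b : V} (ha : a ∈ X.1) (hb : b ∈ ⋃ Y ∈ 𝒮, Y.1) (hab : G.Adj a b) : b ∈ X.1 := by
  obtain ⟨Y, hY, hbY⟩ := Set.mem_iUnion₂.mp hb
  by_contra hbX
  have hXY : X ≠ Y := fun h => hbX (h ▸ hbY)
  refine h𝒮 hX hY hXY ((fromRel_adj _ _ _).mpr ⟨hXY, Or.inl ?_⟩)
  exact connected_induce_union X.2.preconnected Y.2.preconnected ha hbY hab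

lemma compSet_biUnion_eq_of_isIndepSet_blobGraph
    {𝒮 : Set {X : Set V // (G.induce X).Connected}} (h𝒮 : (blobGraph G).IsIndepSet 𝒮)
    {X : {X : Set V // (G.induce X).Connected}} (hX : X ∈ 𝒮) {v : ↥(⋃ Y ∈ 𝒮, Y.1)}
    (hv : (v : V) ∈ X.1) : compSet G (⋃ Y ∈ 𝒮, Y.1) v = X.1 :=
  compSet_eq_of_forall_adj_mem X.2 (Set.subset_biUnion_of_mem hX)
    (fun _ ha _ hb hab => mem_of_adj_of_isIndepSet_blobGraph h𝒮 hX ha hb hab) hv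

end

/-- If `𝒮` is an independent set in the blob graph `G°`, then every connected
component of `G[⋃𝒮]` equals `G[X]` for some `X ∈ 𝒮`; in particular, if each
`G[X]`, `X ∈ 𝒮`, belongs to the class (encoded by `P`), then `⋃𝒮` is an induced
`𝓗`-packing. -/
theorem stmt7 {V : Type*} (G : SimpleGraph V) (P : Set V → Prop)
    (𝒮 : Set {X : Set V // (G.induce X).Connected})
    (hind : ∀ X ∈ 𝒮, ∀ Y ∈ 𝒮, X ≠ Y → ¬ (blobGraph G).Adj X Y) :
    (∀ v : ↥(⋃ X ∈ 𝒮, X.1), ∃ X ∈ 𝒮, compSet G (⋃ X ∈ 𝒮, X.1) v = X.1) ∧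
    ((∀ X ∈ 𝒮, P X.1) →
      ∀ v : ↥(⋃ X ∈ 𝒮, X.1), P (compSet G (⋃ X ∈ 𝒮, X.1) v)) := by
  have h𝒮 : (blobGraph G).IsIndepSet 𝒮 := fun X hX Y hY hXY => hind X hX Y hY hXY
  have hcomp : ∀ v : ↥(⋃ X ∈ 𝒮, X.1), ∃ X ∈ 𝒮, compSet G (⋃ X ∈ 𝒮, X.1) v = X.1 := by
    intro v
    obtain ⟨X, hX, hvX⟩ := Set.mem_iUnion₂.mp v.2
    exact ⟨X, hX, compSet_biUnion_eq_of_isIndepSet_blobGraph h𝒮 hX hvX⟩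
  refine ⟨hcomp, fun hP v => ?_⟩
  obtain ⟨X, hX, hvX⟩ := hcomp v
  exact hvX ▸ hP X hX
end

section
/- Let G be a graph, t ≥ 4, and let H be a shortest induced cycle of G among those of length at least t, with |V(H)| > 2t + 8. Then every vertex v ∈ V(G) \ V(H) that is non-adjacent to some subpath of H on t−1 vertices has all its neighbors in V(H) contained in a subpath of H consisting of 3 consecutive vertices. -/
/-- The cycle graph on `Fin m`. -/
def cycleGraph' (m : ℕ) : SimpleGraph (Fin m) :=
  SimpleGraph.fromRel (fun a b => (a.val + 1) % m = b.val)

private lemma cancel_mod {m : ℕ} (a : ℕ) {x y : ℕ} (hx : x < m) (hy : y < m)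
    (h : (a + x) % m = (a + y) % m) : x = y := by
  have h' : x % m = y % m := Nat.ModEq.add_left_cancel' a h
  rwa [Nat.mod_eq_of_lt hx, Nat.mod_eq_of_lt hy] at h'

/-- Let `H` (given by the induced embedding `f` of `C_m`) be a shortest induced
cycle of `G` among those of length at least `t`, with `m > 2t + 8`. Then every
vertex `v` outside `H` non-adjacent to some subpath of `H` on `t - 1` consecutive
vertices has all its neighbors on `H` among 3 consecutive vertices of `H`. -/
theorem stmt10 {V : Type*} (G : SimpleGraph V) (t m : ℕ)
    (ht : 4 ≤ t) (hm : 2 * t + 8 < m) (hmt : t ≤ m)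
    (f : Fin m ↪ V)
    (hcyc : ∀ a b, G.Adj (f a) (f b) ↔ (cycleGraph' m).Adj a b)
    (hshort : ∀ m' : ℕ, t ≤ m' → ∀ f' : Fin m' ↪ V,
      (∀ a b, G.Adj (f' a) (f' b) ↔ (cycleGraph' m').Adj a b) → m ≤ m')
    (v : V) (hv : ∀ j, v ≠ f j)
    (a0 : ℕ)
    (hnonadj : ∀ k : ℕ, k < t - 1 →
      ¬ G.Adj v (f ⟨(a0 + k) % m, Nat.mod_lt _ (by omega)⟩)) :
    ∃ c : ℕ, ∀ j : Fin m, G.Adj v (f j) →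
      (j.val = c % m ∨ j.val = (c + 1) % m ∨ j.val = (c + 2) % m) := by
  classical
  have hm0 : 0 < m := by omega
  set pos : ℕ → Fin m := fun s => ⟨(a0 + s) % m, Nat.mod_lt _ hm0⟩ with hposdef
  have hnonadj' : ∀ k, k < t - 1 → ¬ G.Adj v (f (pos k)) := by
    intro k hk
    exact hnonadj k hk
  set S : Finset ℕ := (Finset.range m).filter (fun s => G.Adj v (f (pos s))) with hSdef
  have hSmem : ∀ s, s ∈ S ↔ s < m ∧ G.Adj v (f (pos s)) := by
    intro s; simp [hSdef]
  -- every neighbor of v on H corresponds to an element of S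
  have hred : ∀ j : Fin m, G.Adj v (f j) → ∃ s ∈ S, (a0 + s) % m = j.val := by
    intro j hadj
    refine ⟨(j.val + (m - a0 % m)) % m, ?_, ?_⟩
    · have key : (a0 + (j.val + (m - a0 % m)) % m) % m = j.val := by
        rw [Nat.add_mod_mod]
        have h1 := Nat.mod_add_div a0 m
        have h2 : a0 % m < m := Nat.mod_lt _ hm0
        have hmm : m * (a0 / m + 1) = m * (a0 / m) + m := by ring
        have h3 : a0 + (j.val + (m - a0 % m)) = j.val + m * (a0 / m + 1) := by omega
        rw [h3, Nat.add_mul_mod_self_left, Nat.mod_eq_of_lt j.isLt]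
      refine (hSmem _).2 ⟨Nat.mod_lt _ hm0, ?_⟩
      have hje : pos ((j.val + (m - a0 % m)) % m) = j := Fin.ext key
      rwa [hje]
    · rw [Nat.add_mod_mod]
      have h1 := Nat.mod_add_div a0 m
      have h2 : a0 % m < m := Nat.mod_lt _ hm0
      have hmm : m * (a0 / m + 1) = m * (a0 / m) + m := by ring
      have h3 : a0 + (j.val + (m - a0 % m)) = j.val + m * (a0 / m + 1) := by omega
      rw [h3, Nat.add_mul_mod_self_left, Nat.mod_eq_of_lt j.isLt]
  by_cases hne : S.Nonempty
  · set p := S.min' hne with hpdef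
    set q := S.max' hne with hqdef
    have hpS : p ∈ S := S.min'_mem hne
    have hqS : q ∈ S := S.max'_mem hne
    have hpm : p < m := ((hSmem p).1 hpS).1
    have hqm : q < m := ((hSmem q).1 hqS).1
    have hpadj : G.Adj v (f (pos p)) := ((hSmem p).1 hpS).2
    have hqadj : G.Adj v (f (pos q)) := ((hSmem q).1 hqS).2
    have hpt : t - 1 ≤ p := by
      by_contra h
      exact hnonadj' p (by omega) hpadj
    have hpq : p ≤ q := Finset.min'_le S q hqS
    have hq3 : q ≤ p + 2 := by
      by_contra hcon
      push_neg at hcon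
      set m' := m - q + p + 2 with hm'def
      have hm'lt : m' < m := by omega
      have hm't : t ≤ m' := by omega
      have hm'2 : 2 ≤ m' := by omega
      set g : Fin m' → V := fun i => if i.val = 0 then v else f (pos (q + i.val - 1)) with hg
      have hoff : ∀ i : Fin m', i.val ≠ 0 →
          (pos (q + i.val - 1)).val = ((a0 + q) + (i.val - 1)) % m := by
        intro i hi
        have h : a0 + (q + i.val - 1) = (a0 + q) + (i.val - 1) := by omega
        show (a0 + (q + i.val - 1)) % m = _
        rw [h]
      have hginj : Function.Injective g := by
        intro i j hij
        have hil := i.isLt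
        have hjl := j.isLt
        by_cases hi : i.val = 0 <;> by_cases hj : j.val = 0
        · exact Fin.ext (by omega)
        · simp only [hg, hi, hj, if_pos, if_neg, ite_true, ite_false] at hij
          exact absurd hij (hv _)
        · simp only [hg, hi, hj, if_pos, if_neg, ite_true, ite_false] at hij
          exact absurd hij.symm (hv _)
        · simp only [hg, hi, hj, if_neg, ite_false] at hij
          have h3 : pos (q + i.val - 1) = pos (q + j.val - 1) := f.injective hij
          have h4 : ((a0 + q) + (i.val - 1)) % m = ((a0 + q) + (j.val - 1)) % m := by
            rw [← hoff i hi, ← hoff j hj, h3]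
          have := cancel_mod (a0 + q) (by omega : i.val - 1 < m)
            (by omega : j.val - 1 < m) h4
          exact Fin.ext (by omega)
      have hmod1 : ∀ x : ℕ, x < m' → ((x + 1) % m' = 0 ↔ x = m' - 1) := by
        intro x hx
        constructor
        · intro h
          have hd := Nat.dvd_of_mod_eq_zero h
          have := Nat.le_of_dvd (by omega) hd
          omega
        · intro h; subst h; rw [Nat.sub_add_cancel (by omega)]; exact Nat.mod_self m'
      -- adjacency of v with interior vertices
      have hA : ∀ b : Fin m', b.val ≠ 0 →
          (G.Adj v (g b) ↔ (b.val = 1 ∨ b.val = m' - 1)) := by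
        intro b hb
        have hbl := b.isLt
        have hgb : g b = f (pos (q + b.val - 1)) := by
          simp only [hg, hb, if_neg, ite_false]
        rw [hgb]
        constructor
        · intro hadj
          by_cases hlt : q + b.val - 1 < m
          · have hsS : q + b.val - 1 ∈ S := (hSmem _).2 ⟨hlt, hadj⟩
            have := Finset.le_max' S _ hsS
            left; omega
          · have hval : pos (q + b.val - 1) = pos (q + b.val - 1 - m) := by
              apply Fin.ext
              show (a0 + (q + b.val - 1)) % m = (a0 + (q + b.val - 1 - m)) % m
              have h : a0 + (q + b.val - 1) = (a0 + (q + b.val - 1 - m)) + m := by omega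
              rw [h, Nat.add_mod_right]
            rw [hval] at hadj
            have hsS : q + b.val - 1 - m ∈ S := (hSmem _).2 ⟨by omega, hadj⟩
            have hge := Finset.min'_le S _ hsS
            right; omega
        · rintro (h1 | h1)
          · have : q + b.val - 1 = q := by omega
            rw [this]; exact hqadj
          · have hbv : q + b.val - 1 = m + p := by omega
            rw [hbv]
            have hval : pos (m + p) = pos p := by
              apply Fin.ext
              show (a0 + (m + p)) % m = (a0 + p) % m
              have h : a0 + (m + p) = (a0 + p) + m := by omega
              rw [h, Nat.add_mod_right]
            rw [hval]; exact hpadj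
      -- adjacency between interior vertices
      have hB : ∀ a b : Fin m', a.val ≠ 0 → b.val ≠ 0 →
          (G.Adj (g a) (g b) ↔ (a.val ≠ b.val ∧ (a.val + 1 = b.val ∨ b.val + 1 = a.val))) := by
        intro a b ha hb
        have hal := a.isLt
        have hbl := b.isLt
        have hga : g a = f (pos (q + a.val - 1)) := by
          simp only [hg, ha, if_neg, ite_false]
        have hgb : g b = f (pos (q + b.val - 1)) := by
          simp only [hg, hb, if_neg, ite_false]
        rw [hga, hgb, hcyc]
        simp only [cycleGraph', SimpleGraph.fromRel_adj]
        have h1 := hoff a ha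
        have h2 := hoff b hb
        clear h1 h2
        constructor
        · rintro ⟨hne', hor | hor⟩
          · have hor2 : (a0 + (q + a.val - 1) + 1) % m = (a0 + (q + b.val - 1)) % m := by
              rw [← Nat.mod_add_mod]; exact hor
            have hor' : ((a0 + q) + (a.val - 1 + 1)) % m = ((a0 + q) + (b.val - 1)) % m := by
              have e1 : (a0 + q) + (a.val - 1 + 1) = a0 + (q + a.val - 1) + 1 := by omega
              have e2 : (a0 + q) + (b.val - 1) = a0 + (q + b.val - 1) := by omega
              rw [e1, e2, hor2]
            have := cancel_mod (a0 + q) (by omega : a.val - 1 + 1 < m)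
              (by omega : b.val - 1 < m) hor'
            exact ⟨by omega, Or.inl (by omega)⟩
          · have hor2 : (a0 + (q + b.val - 1) + 1) % m = (a0 + (q + a.val - 1)) % m := by
              rw [← Nat.mod_add_mod]; exact hor
            have hor' : ((a0 + q) + (b.val - 1 + 1)) % m = ((a0 + q) + (a.val - 1)) % m := by
              have e1 : (a0 + q) + (b.val - 1 + 1) = a0 + (q + b.val - 1) + 1 := by omega
              have e2 : (a0 + q) + (a.val - 1) = a0 + (q + a.val - 1) := by omega
              rw [e1, e2, hor2]
            have := cancel_mod (a0 + q) (by omega : b.val - 1 + 1 < m)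
              (by omega : a.val - 1 < m) hor'
            exact ⟨by omega, Or.inr (by omega)⟩
        · rintro ⟨hne', hor | hor⟩
          · refine ⟨?_, Or.inl ?_⟩
            · intro hcon'
              have hval : pos (q + a.val - 1) = pos (q + b.val - 1) := hcon'
              have h4 : ((a0 + q) + (a.val - 1)) % m = ((a0 + q) + (b.val - 1)) % m := by
                have e1 : (a0 + q) + (a.val - 1) = a0 + (q + a.val - 1) := by omega
                have e2 : (a0 + q) + (b.val - 1) = a0 + (q + b.val - 1) := by omega
                rw [e1, e2]
                exact congrArg Fin.val hval
              have := cancel_mod (a0 + q) (by omega : a.val - 1 < m)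
                (by omega : b.val - 1 < m) h4
              omega
            · show ((a0 + (q + a.val - 1)) % m + 1) % m = (a0 + (q + b.val - 1)) % m
              rw [Nat.mod_add_mod]
              congr 1
              omega
          · refine ⟨?_, Or.inr ?_⟩
            · intro hcon'
              have hval : pos (q + a.val - 1) = pos (q + b.val - 1) := hcon'
              have h4 : ((a0 + q) + (a.val - 1)) % m = ((a0 + q) + (b.val - 1)) % m := by
                have e1 : (a0 + q) + (a.val - 1) = a0 + (q + a.val - 1) := by omega
                have e2 : (a0 + q) + (b.val - 1) = a0 + (q + b.val - 1) := by omega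
                rw [e1, e2]
                exact congrArg Fin.val hval
              have := cancel_mod (a0 + q) (by omega : a.val - 1 < m)
                (by omega : b.val - 1 < m) h4
              omega
            · show ((a0 + (q + b.val - 1)) % m + 1) % m = (a0 + (q + a.val - 1)) % m
              rw [Nat.mod_add_mod]
              congr 1
              omega
      -- the full adjacency characterization
      have hadjiff : ∀ a b : Fin m', G.Adj (g a) (g b) ↔ (cycleGraph' m').Adj a b := by
        have haux : ∀ a b : Fin m', a.val = 0 → b.val ≠ 0 →
            (G.Adj (g a) (g b) ↔ (cycleGraph' m').Adj a b) := by
          intro a b ha hb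
          have hbl := b.isLt
          have hga : g a = v := by simp only [hg, ha, if_pos, ite_true]
          rw [hga]
          simp only [cycleGraph', SimpleGraph.fromRel_adj]
          rw [hA b hb]
          constructor
          · rintro (h1 | h1)
            · refine ⟨fun hab => hb (by rw [← hab]; exact ha), Or.inl ?_⟩
              rw [ha, h1]
              exact Nat.mod_eq_of_lt (by omega)
            · refine ⟨fun hab => hb (by rw [← hab]; exact ha), Or.inr ?_⟩
              rw [ha, (hmod1 b.val hbl).2 h1]
          · rintro ⟨hne', hor | hor⟩
            · left
              rw [ha, Nat.mod_eq_of_lt (show 0 + 1 < m' by omega)] at hor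
              omega
            · right
              rw [ha] at hor
              exact (hmod1 b.val hbl).1 hor
        intro a b
        by_cases ha : a.val = 0 <;> by_cases hb : b.val = 0
        · have hab : a = b := Fin.ext (by omega)
          subst hab
          simp only [cycleGraph', SimpleGraph.fromRel_adj]
          constructor
          · intro h; exact absurd h (G.irrefl)
          · rintro ⟨h, -⟩; exact absurd rfl h
        · exact haux a b ha hb
        · rw [G.adj_comm, haux b a hb ha]
          simp only [cycleGraph', SimpleGraph.fromRel_adj]
          constructor
          · rintro ⟨h1, h2⟩; exact ⟨h1.symm, h2.symm⟩
          · rintro ⟨h1, h2⟩; exact ⟨h1.symm, h2.symm⟩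
        · rw [hB a b ha hb]
          simp only [cycleGraph', SimpleGraph.fromRel_adj]
          have hal := a.isLt
          have hbl := b.isLt
          constructor
          · rintro ⟨h1, h2 | h2⟩
            · refine ⟨fun hab => h1 (by rw [hab]), Or.inl ?_⟩
              rw [← h2]
              exact Nat.mod_eq_of_lt (by omega)
            · refine ⟨fun hab => h1 (by rw [hab]), Or.inr ?_⟩
              rw [← h2]
              exact Nat.mod_eq_of_lt (by omega)
          · rintro ⟨h1, h2 | h2⟩
            · have hne2 : a.val ≠ b.val := fun h' => h1 (Fin.ext h')
              refine ⟨hne2, Or.inl ?_⟩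
              by_cases hc : a.val + 1 < m'
              · rw [Nat.mod_eq_of_lt hc] at h2; omega
              · have : a.val = m' - 1 := by omega
                rw [this, Nat.sub_add_cancel (by omega), Nat.mod_self] at h2
                omega
            · have hne2 : a.val ≠ b.val := fun h' => h1 (Fin.ext h')
              refine ⟨hne2, Or.inr ?_⟩
              by_cases hc : b.val + 1 < m'
              · rw [Nat.mod_eq_of_lt hc] at h2; omega
              · have : b.val = m' - 1 := by omega
                rw [this, Nat.sub_add_cancel (by omega), Nat.mod_self] at h2
                omega
      have := hshort m' hm't ⟨g, hginj⟩ hadjiff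
      omega
    -- conclude with c = a0 + p
    refine ⟨a0 + p, ?_⟩
    intro j hadj
    obtain ⟨s, hsS, hsval⟩ := hred j hadj
    have hsp := Finset.min'_le S s hsS
    have hsq := Finset.le_max' S s hsS
    have hcase : s = p ∨ s = p + 1 ∨ s = p + 2 := by omega
    rcases hcase with h | h | h
    · left; rw [← hsval]; congr 1; omega
    · right; left; rw [← hsval]; congr 1; omega
    · right; right; rw [← hsval]; congr 1; omega
  · refine ⟨0, ?_⟩
    intro j hadj
    obtain ⟨s, hsS, -⟩ := hred j hadj
    exact absurd ⟨s, hsS⟩ hne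
end
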